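/- arXiv:0810.3641 — 3 statements merged into one kernel-verified Lean document; each statement's English description precedes it below -/
import Mathlib

section
/- For every k ∈ ℕ and every formal power series f ∈ ℂ[[z]], the Hadamard product (1/(1−z))^{k+1} ⊙ f equals ∑_{j=0}^{k} (C(k,j)/j!) · zʲ · f⁽ʲ⁾(z), i.e., the Hadamard multiplication by 1/(1−z)^{k+1} is the diagonal operator ∑_{j=0}^{k} (C(k,j)/j!) β((a⁺)ʲaʲ). -/
open PowerSeries Finset

noncomputable def hadamard (f g : PowerSeries ℂ) : PowerSeries ℂ :=
  PowerSeries.mk fun n => (PowerSeries.coeff n f) * (PowerSeries.coeff n g)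

/-! On `zⁿ` the operator `zʲ f⁽ʲ⁾` acts by the falling factorial `n(n-1)⋯(n-j+1) = j! C(n,j)`,
so the right-hand side multiplies the `n`-th coefficient by `∑ⱼ C(k,j) C(n,j)`, which is
`C(n+k,k)`, the `n`-th coefficient of `(1-z)^{-(k+1)}`, by Vandermonde's identity. -/

theorem Nat.add_choose_eq_sum_choose_mul_choose (n k : ℕ) :
    (n + k).choose k = ∑ j ∈ range (k + 1), k.choose j * n.choose j := by
  rw [Nat.add_choose_eq, Nat.sum_antidiagonal_eq_sum_range_succ_mk]
  refine sum_congr rfl fun j hj => ?_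
  rw [Nat.choose_symm (mem_range_succ_iff.mp hj), mul_comm]

namespace PowerSeries

theorem coeff_hadamard (f g : ℂ⟦X⟧) (n : ℕ) :
    coeff n (hadamard f g) = coeff n f * coeff n g :=
  coeff_mk _ _

theorem inv_one_sub_pow_succ {K : Type*} [Field K] (k : ℕ) :
    ((1 - X : K⟦X⟧) ^ (k + 1))⁻¹ = mk fun n => ((k + n).choose k : K) := by
  symm
  rw [eq_inv_iff_mul_eq_one (by simp)]
  exact mk_add_choose_mul_one_sub_pow_eq_one K k

theorem coeff_X_pow_mul_iterate_derivative {R : Type*} [CommSemiring R] (f : R⟦X⟧) (j n : ℕ) :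
    coeff n (X ^ j * (d⁄dX R)^[j] f) = n.descFactorial j * coeff n f := by
  rw [coeff_X_pow_mul']
  split_ifs with hjn
  · obtain ⟨m, rfl⟩ := Nat.exists_eq_add_of_le' hjn
    rw [Nat.add_sub_cancel, coeff_iterate_derivative, Nat.add_descFactorial_eq_ascFactorial]
  · rw [Nat.descFactorial_of_lt (not_le.mp hjn), Nat.cast_zero, zero_mul]

end PowerSeries

theorem hadamard_geom_pow_eq_diagonal (k : ℕ) (f : PowerSeries ℂ) :
    hadamard (((1 - X : PowerSeries ℂ) ^ (k + 1))⁻¹) f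
      = ∑ j ∈ range (k + 1),
          PowerSeries.C ((k.choose j : ℂ) / (j.factorial : ℂ)) *
            ((X : PowerSeries ℂ) ^ j * (fun g => PowerSeries.derivative ℂ g)^[j] f) := by
  ext n
  have hterm : ∀ j, coeff n (C ((k.choose j : ℂ) / j.factorial) *
      ((X : ℂ⟦X⟧) ^ j * (d⁄dX ℂ)^[j] f)) = (k.choose j * n.choose j : ℕ) * coeff n f := by
    intro j
    rw [coeff_C_mul, coeff_X_pow_mul_iterate_derivative, Nat.descFactorial_eq_factorial_mul_choose]
    have hfact : (j.factorial : ℂ) ≠ 0 := Nat.cast_ne_zero.mpr j.factorial_ne_zero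
    push_cast
    field_simp
  rw [coeff_hadamard, inv_one_sub_pow_succ, coeff_mk, map_sum, sum_congr rfl fun j _ => hterm j,
    ← sum_mul, ← Nat.cast_sum, add_comm k n, Nat.add_choose_eq_sum_choose_mul_choose]
end

section
/- For α, β ∈ ℂ and k, l ∈ ℕ, the Hadamard product 1/(1−αz)^{k+1} ⊙ 1/(1−βz)^{l+1} equals the substitution z ↦ αβz applied to ∑_{j=0}^{k} (C(k,j)/j!) · (l+1)(l+2)⋯(l+j) · zʲ/(1−z)^{l+j+1}. In particular, this Hadamard product is again a rational power series. -/
/-!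
Since `((1 - a X) ^ (m + 1))⁻¹ = ∑ C(m + n, m) aⁿ Xⁿ`, comparing `n`-th coefficients reduces the
identity to `∑ⱼ C(k, j) C(l + j, j) C(l + n, l + j) = C(k + n, k) C(l + n, l)`.
-/

open PowerSeries Finset

theorem Nat.sum_range_choose_mul_choose (k n : ℕ) :
    ∑ j ∈ range (k + 1), k.choose j * n.choose j = (n + k).choose k := by
  rw [Nat.add_choose_eq, Finset.Nat.sum_antidiagonal_eq_sum_range_succ_mk]
  refine sum_congr rfl fun j hj => ?_
  rw [Nat.choose_symm (Nat.lt_succ_iff.mp (mem_range.mp hj)), mul_comm]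

/-- Trinomial revision `C(l+j, j) C(l+n, l+j) = C(l+n, l) C(n, j)` turns the sum into
Vandermonde's `∑ C(k, j) C(n, j)`. -/
theorem Nat.sum_range_choose_mul_choose_mul_choose (k l n : ℕ) :
    ∑ j ∈ range (k + 1), k.choose j * (l + j).choose j * (l + n).choose (l + j)
      = (k + n).choose k * (l + n).choose l := by
  have revision (j : ℕ) :
      (l + j).choose j * (l + n).choose (l + j) = (l + n).choose l * n.choose j := by
    rw [← Nat.choose_symm_add, mul_comm, Nat.choose_mul (Nat.le_add_right l j)]
    simp
  simp_rw [mul_assoc, revision, mul_left_comm _ ((l + n).choose l), ← mul_sum,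
    Nat.sum_range_choose_mul_choose, add_comm n, mul_comm]

section Field

variable {K : Type*} [Field K]

theorem PowerSeries.inv_one_sub_C_mul_X_pow_succ (a : K) (m : ℕ) :
    ((1 - C a * X) ^ (m + 1))⁻¹ = mk fun n => ((m + n).choose m : K) * a ^ n := by
  rw [inv_eq_iff_mul_eq_one (by simp)]
  have hmk : (mk fun n => ((m + n).choose m : K) * a ^ n)
      = rescale a (mk fun n => (m + n).choose m) := by
    ext n
    simp [coeff_rescale, mul_comm]
  have hpow : (1 - C a * X : K⟦X⟧) ^ (m + 1) = rescale a ((1 - X) ^ (m + 1)) := by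
    simp [rescale_X]
  rw [hmk, hpow, ← map_mul, mk_add_choose_mul_one_sub_pow_eq_one, map_one]

theorem PowerSeries.coeff_X_pow_mul_inv_one_sub_X_pow (m j n : ℕ) :
    coeff n (X ^ j * ((1 - X : K⟦X⟧) ^ (m + j + 1))⁻¹) = ((m + n).choose (m + j) : K) := by
  have h := inv_one_sub_C_mul_X_pow_succ (1 : K) (m + j)
  rw [map_one, one_mul] at h
  rw [h, coeff_X_pow_mul', coeff_mk, one_pow, mul_one]
  split_ifs
  · rw [show m + j + (n - j) = m + n by omega]
  · rw [Nat.choose_eq_zero_of_lt (by omega), Nat.cast_zero]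

theorem Nat.choose_div_factorial_mul_ascFactorial [CharZero K] (k l j : ℕ) :
    (k.choose j : K) / j.factorial * (l + 1).ascFactorial j = k.choose j * (l + j).choose j := by
  have : (j.factorial : K) ≠ 0 := Nat.cast_ne_zero.mpr j.factorial_ne_zero
  rw [Nat.ascFactorial_eq_factorial_mul_choose, Nat.cast_mul, div_mul_eq_mul_div, mul_div_assoc,
    mul_div_cancel_left₀ _ this]

end Field

theorem hadamard_rational_table (α β : ℂ) (k l : ℕ) :
    hadamard (((1 - PowerSeries.C α * X) ^ (k + 1))⁻¹)
        (((1 - PowerSeries.C β * X) ^ (l + 1))⁻¹)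
      = PowerSeries.rescale (α * β)
          (∑ j ∈ range (k + 1),
            PowerSeries.C (((k.choose j : ℂ) / (j.factorial : ℂ)) * ((l + 1).ascFactorial j : ℂ)) *
              ((X : PowerSeries ℂ) ^ j * ((1 - X : PowerSeries ℂ) ^ (l + j + 1))⁻¹)) := by
  ext n
  simp_rw [hadamard, coeff_mk, inv_one_sub_C_mul_X_pow_succ, coeff_mk, coeff_rescale, map_sum,
    coeff_C_mul, coeff_X_pow_mul_inv_one_sub_X_pow, Nat.choose_div_factorial_mul_ascFactorial]
  have h := congrArg (Nat.cast : ℕ → ℂ) (Nat.sum_range_choose_mul_choose_mul_choose k l n)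
  push_cast at h
  rw [h]
  ring
end

section
/- The Hadamard product of two rational power series in ℂ[[z]] is rational: if f = P₁/Q₁ and g = P₂/Q₂ with P_i, Q_i ∈ ℂ[z] and Q_i(0) ≠ 0, then f ⊙ g is also of the form P/Q with P, Q ∈ ℂ[z] and Q(0) ≠ 0. -/
open PowerSeries

/-- A power series is rational if it equals `P/Q` for polynomials `P, Q` with `Q(0) ≠ 0`. -/
def IsRationalPS (f : PowerSeries ℂ) : Prop :=
  ∃ P Q : Polynomial ℂ, Q.coeff 0 ≠ 0 ∧ f * (Q : PowerSeries ℂ) = (P : PowerSeries ℂ)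

/-!
A power series is rational exactly when its coefficient sequence `a` is annihilated by a nonzero
polynomial in the shift operator `S a = (n ↦ a (n + 1))` (the denominator, reflected, gives the
recurrence), and over a field this happens exactly when the shifts `Sᵏ a` span a finite-dimensional
space. The shifts of a pointwise product `a * b` lie in the product of the spans of the shifts of
`a` and of `b`, which is finite-dimensional when both factors are.
-/

open Polynomial Finset

section Shift

variable (R : Type*) [CommSemiring R]

noncomputable def seqShift : Module.End R (ℕ → R) :=
  LinearMap.funLeft R R (· + 1)

variable {R}

theorem seqShift_pow_apply (k : ℕ) (a : ℕ → R) (n : ℕ) : (seqShift R ^ k) a n = a (n + k) := by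
  induction k generalizing n with
  | zero => rfl
  | succ k ih =>
    rw [pow_succ', Module.End.mul_apply]
    exact (ih (n + 1)).trans (congrArg a (add_right_comm n 1 k))

noncomputable def shiftEval (a : ℕ → R) : R[X] →ₗ[R] (ℕ → R) :=
  LinearMap.applyₗ a ∘ₗ (Polynomial.aeval (seqShift R)).toLinearMap

theorem shiftEval_apply (a : ℕ → R) (p : R[X]) :
    shiftEval a p = Polynomial.aeval (seqShift R) p a := rfl

theorem shiftEval_apply_eq_sum (a : ℕ → R) {p : R[X]} {N : ℕ} (hp : p.natDegree ≤ N) (n : ℕ) :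
    shiftEval a p n = ∑ j ∈ range (N + 1), p.coeff j * a (n + j) := by
  rw [shiftEval_apply, aeval_eq_sum_range' (Nat.lt_succ_of_le hp)]
  simp [seqShift_pow_apply]

noncomputable def shiftSpan (a : ℕ → R) : Submodule R (ℕ → R) :=
  Submodule.span R (Set.range fun k => (seqShift R ^ k) a)

theorem seqShift_pow_mem_shiftSpan (a : ℕ → R) (k : ℕ) : (seqShift R ^ k) a ∈ shiftSpan a :=
  Submodule.subset_span ⟨k, rfl⟩

theorem shiftEval_mem_shiftSpan (a : ℕ → R) (p : R[X]) : shiftEval a p ∈ shiftSpan a := by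
  rw [shiftEval_apply, aeval_eq_sum_range, LinearMap.coe_sum, Finset.sum_apply]
  exact Submodule.sum_mem _ fun i _ => Submodule.smul_mem _ _ (seqShift_pow_mem_shiftSpan a i)

theorem shiftSpan_mul_le (a b : ℕ → R) : shiftSpan (a * b) ≤ shiftSpan a * shiftSpan b := by
  refine Submodule.span_le.2 (Set.range_subset_iff.2 fun k => ?_)
  have hmul : (seqShift R ^ k) (a * b) = (seqShift R ^ k) a * (seqShift R ^ k) b := by
    ext n
    simp only [seqShift_pow_apply, Pi.mul_apply]
  rw [hmul]
  exact Submodule.mul_mem_mul (seqShift_pow_mem_shiftSpan a k) (seqShift_pow_mem_shiftSpan b k)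

end Shift

section Field

variable {K : Type*} [Field K]

/-- `Sᵏ a = (Xᵏ % p)(S) a` when `p(S) a = 0`. -/
theorem shiftSpan_le_map_degreeLT {a : ℕ → K} {p : K[X]} (hp : p ≠ 0) (ha : shiftEval a p = 0) :
    shiftSpan a ≤ (degreeLT K p.natDegree).map (shiftEval a) := by
  refine Submodule.span_le.2 (Set.range_subset_iff.2 fun k =>
    Submodule.mem_map.2 ⟨(Polynomial.X : K[X]) ^ k % p, ?_, ?_⟩)
  · rw [mem_degreeLT, ← degree_eq_natDegree hp]
    exact degree_mod_lt _ hp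
  · conv_rhs => rw [← aeval_X_pow (R := K) (seqShift K),
      ← EuclideanDomain.mod_add_div' ((Polynomial.X : K[X]) ^ k) p]
    rw [shiftEval_apply] at ha
    rw [shiftEval_apply, map_add, map_mul, LinearMap.add_apply, Module.End.mul_apply, ha, map_zero,
      add_zero]

/-- `shiftEval a` cannot embed the infinite-dimensional `K[X]` into the finite-dimensional
`shiftSpan a`. -/
theorem exists_ne_zero_shiftEval_eq_zero {a : ℕ → K} (h : (shiftSpan a).FG) :
    ∃ p : K[X], p ≠ 0 ∧ shiftEval a p = 0 := by
  have : Module.Finite K (shiftSpan a) := Module.Finite.iff_fg.2 h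
  by_contra! hinj
  have : Function.Injective ((shiftEval a).codRestrict _ (shiftEval_mem_shiftSpan a)) :=
    (injective_iff_map_eq_zero _).2 fun p hp => by
      by_contra hp0
      exact hinj p hp0 (congrArg Subtype.val hp)
  exact Polynomial.not_finite (Module.Finite.of_injective _ this)

theorem shiftSpan_fg_iff {a : ℕ → K} :
    (shiftSpan a).FG ↔ ∃ p : K[X], p ≠ 0 ∧ shiftEval a p = 0 :=
  ⟨exists_ne_zero_shiftEval_eq_zero, fun ⟨_, hp, ha⟩ =>
    ((Module.Finite.iff_fg.1 inferInstance).map _).of_le (shiftSpan_le_map_degreeLT hp ha)⟩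

theorem shiftSpan_mul_fg {a b : ℕ → K} (ha : (shiftSpan a).FG) (hb : (shiftSpan b).FG) :
    (shiftSpan (a * b)).FG :=
  (ha.mul hb).of_le (shiftSpan_mul_le a b)

end Field

section PowerSeries

variable {R : Type*} [CommSemiring R]

theorem coeff_add_mul_polynomial (f : R⟦X⟧) {q : R[X]} {N : ℕ} (hq : q.natDegree ≤ N) (n : ℕ) :
    coeff (n + N) (f * (q : R⟦X⟧)) = ∑ i ∈ range (N + 1), q.coeff i * coeff (n + N - i) f := by
  rw [mul_comm, PowerSeries.coeff_mul,
    Finset.Nat.sum_antidiagonal_eq_sum_range_succ fun i j => coeff i (q : R⟦X⟧) * coeff j f]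
  simp only [Polynomial.coeff_coe]
  symm
  apply Finset.sum_subset (range_subset_range.2 (by omega))
  intro i _ hi
  rw [mem_range] at hi
  rw [coeff_eq_zero_of_natDegree_lt (by omega), zero_mul]

theorem coeff_add_mul_reflect (f : R⟦X⟧) {p : R[X]} {N : ℕ} (hp : p.natDegree ≤ N) (n : ℕ) :
    coeff (n + N) (f * (reflect N p : R⟦X⟧)) = shiftEval (fun m => coeff m f) p n := by
  rw [coeff_add_mul_polynomial f (natDegree_reflect_le.trans (max_le le_rfl hp)) n,
    shiftEval_apply_eq_sum _ hp, ← sum_range_reflect]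
  refine sum_congr rfl fun j hj => ?_
  rw [mem_range] at hj
  rw [coeff_reflect, revAt_le (by omega)]
  congr 3 <;> omega

end PowerSeries

theorem isRationalPS_iff_exists_shiftEval_eq_zero (f : ℂ⟦X⟧) :
    IsRationalPS f ↔ ∃ p : ℂ[X], p ≠ 0 ∧ shiftEval (fun n => coeff n f) p = 0 := by
  constructor
  · rintro ⟨P, Q, hQ, hPQ⟩
    set N := Q.natDegree + P.natDegree + 1
    refine ⟨reflect N Q, reflect_eq_zero_iff.not.2 fun h => hQ (by simp [h]), ?_⟩
    ext n
    rw [← coeff_add_mul_reflect f (natDegree_reflect_le.trans (max_le le_rfl (by omega))) n,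
      reflect_reflect, hPQ, Polynomial.coeff_coe, coeff_eq_zero_of_natDegree_lt (by omega)]
    rfl
  · rintro ⟨p, hp, hfp⟩
    set Q := reflect p.natDegree p
    refine ⟨trunc p.natDegree (f * (Q : ℂ⟦X⟧)), Q, ?_, ?_⟩
    · rwa [coeff_reflect, revAt_zero, ← leadingCoeff, leadingCoeff_ne_zero]
    · have hshift : (PowerSeries.mk fun i => coeff (i + p.natDegree) (f * (Q : ℂ⟦X⟧))) = 0 := by
        ext n
        rw [coeff_mk, coeff_add_mul_reflect f le_rfl, hfp]
        rfl
      conv_lhs => rw [eq_X_pow_mul_shift_add_trunc p.natDegree (f * (Q : ℂ⟦X⟧)), hshift]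
      simp

theorem hadamard_rational_of_rational (f g : PowerSeries ℂ)
    (hf : IsRationalPS f) (hg : IsRationalPS g) : IsRationalPS (hadamard f g) := by
  rw [isRationalPS_iff_exists_shiftEval_eq_zero, ← shiftSpan_fg_iff] at *
  have hcoeff : (fun n => coeff n (hadamard f g)) = (fun n => coeff n f) * fun n => coeff n g := by
    ext n
    simp [hadamard]
  rw [hcoeff]
  exact shiftSpan_mul_fg hf hg
end
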